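/- Let f(n) denote the number of words in [3]^n avoiding the generalized pattern 13-2. Then the identity (∑_{n ≥ 0} f(n)·x^n) · (1 - 2x)·(1 - 3x + x²) = (1 - x)² holds as an identity of formal power series over ℚ. -/

import Mathlib

open PowerSeries

/-- The `i`-th letter (1-based value in `{1,…,k}`) of a word `w ∈ [k]^n`,
with value `0` outside the word. -/
def letter {n k : ℕ} (w : Fin n → Fin k) (i : ℕ) : ℕ :=
  if h : i < n then (w ⟨i, h⟩ : ℕ) + 1 else 0

/-- `w` avoids the generalized pattern 13-2: there are no 0-based indices
`i, j` with `i + 2 ≤ j < n` such that `w i < w j < w (i+1)`. -/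
def Avoids13d2 {n k : ℕ} (w : Fin n → Fin k) : Prop :=
  ∀ i j : ℕ, i + 2 ≤ j → j < n →
    ¬ (letter w i < letter w j ∧ letter w j < letter w (i + 1))

/-- The number of words in `[3]^n` avoiding 13-2. -/
noncomputable def f (n : ℕ) : ℕ := Nat.card {w : Fin n → Fin 3 // Avoids13d2 w}

/-! Prepending a letter `x` to a 13-2-avoiding word `w` creates an occurrence of 13-2 exactly when
`x = 1`, `w` starts with 3 and `w` contains a 2. So `f (n + 1) = 3 f n - d n`, where `d n` counts the
avoiders that start with 3 and contain a 2. Such a word of length `n + 1` is a 3 followed by an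
avoider containing a 2, and the words without a 2 (all `2 ^ n` words over `{1, 3}`) avoid 13-2, so
`d (n + 1) = f n - 2 ^ n`. Hence `f (n + 2) = 3 f (n + 1) - f n + 2 ^ n` with `f 0 = 1`, `f 1 = 3`,
which is the generating-function identity. -/

open Finset

section Words

variable {n k : ℕ}

theorem letter_le (w : Fin n → Fin k) (i : ℕ) : letter w i ≤ k := by
  unfold letter
  split_ifs
  · exact (w _).isLt
  · exact Nat.zero_le k

theorem one_le_letter (w : Fin n → Fin k) {i : ℕ} (hi : i < n) : 1 ≤ letter w i := by
  simp [letter, hi]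

theorem letter_of_le (w : Fin n → Fin k) {i : ℕ} (hi : n ≤ i) : letter w i = 0 := by
  simp [letter, Nat.not_lt.mpr hi]

@[simp]
theorem letter_cons_zero (x : Fin k) (w : Fin n → Fin k) :
    letter (Fin.cons x w : Fin (n + 1) → Fin k) 0 = x + 1 := by
  simp [letter]

@[simp]
theorem letter_cons_succ (x : Fin k) (w : Fin n → Fin k) (i : ℕ) :
    letter (Fin.cons x w : Fin (n + 1) → Fin k) (i + 1) = letter w i := by
  by_cases hi : i < n
  · simp [letter, hi, ← Fin.succ_mk]
  · simp [letter, hi]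

theorem exists_letter_cons_eq_iff (x : Fin k) (w : Fin n → Fin k) (m : ℕ) :
    (∃ j, letter (Fin.cons x w : Fin (n + 1) → Fin k) j = m) ↔ x + 1 = m ∨ ∃ j, letter w j = m := by
  constructor
  · rintro ⟨_ | j, hj⟩
    · exact .inl (by simpa using hj)
    · exact .inr ⟨j, by simpa using hj⟩
  · rintro (hx | ⟨j, hj⟩)
    · exact ⟨0, by simpa using hx⟩
    · exact ⟨j + 1, by simpa using hj⟩

theorem exists_letter_eq_succ_iff (w : Fin n → Fin k) (a : Fin k) :
    (∃ j, letter w j = a + 1) ↔ ∃ i, w i = a := by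
  constructor
  · rintro ⟨j, hj⟩
    have hjn : j < n := by
      by_contra hjn
      rw [letter_of_le w (Nat.not_lt.mp hjn)] at hj
      omega
    exact ⟨⟨j, hjn⟩, Fin.ext (by simpa [letter, hjn] using hj)⟩
  · rintro ⟨i, rfl⟩
    exact ⟨i, by simp [letter]⟩

theorem avoids13d2_cons_iff {x : Fin k} {w : Fin n → Fin k} :
    Avoids13d2 (Fin.cons x w : Fin (n + 1) → Fin k) ↔
      Avoids13d2 w ∧ ∀ j, ¬ (x + 1 < letter w j ∧ letter w j < letter w 0) := by
  constructor
  · intro h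
    refine ⟨fun i j hij hj => by simpa using h (i + 1) (j + 1) (by omega) (by omega), fun j hj => ?_⟩
    have hjn : j < n := by
      by_contra hjn
      rw [letter_of_le w (Nat.not_lt.mp hjn)] at hj
      omega
    have hj0 : j ≠ 0 := by
      rintro rfl
      omega
    exact h 0 (j + 1) (by omega) (by omega) (by simpa using hj)
  · rintro ⟨hw, hx⟩ (_ | i) (_ | j) hij hj
    · omega
    · simpa using hx j
    · omega
    · simpa using hw i j (by omega) (by omega)

end Words

section Ternary

variable {n : ℕ}

def StartsThreeHasTwo (w : Fin n → Fin 3) : Prop := letter w 0 = 3 ∧ ∃ j, letter w j = 2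

-- `x : Fin 3` is the letter `x + 1`, so `x = 0` means that the prepended letter is 1.
theorem avoids13d2_cons_iff_of_three {x : Fin 3} {w : Fin n → Fin 3} :
    Avoids13d2 (Fin.cons x w : Fin (n + 1) → Fin 3) ↔
      Avoids13d2 w ∧ ¬ (x = 0 ∧ StartsThreeHasTwo w) := by
  rw [avoids13d2_cons_iff, StartsThreeHasTwo]
  refine and_congr_right fun _ => ⟨fun h ⟨hx, h0, j, hj⟩ => h j (by simp [hx, hj, h0]), ?_⟩
  intro h j hj
  have := letter_le w 0
  exact h ⟨Fin.ext (by omega), by omega, j, by omega⟩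

theorem exists_letter_eq_two_iff (w : Fin n → Fin 3) : (∃ j, letter w j = 2) ↔ ∃ i, w i = 1 :=
  exists_letter_eq_succ_iff w 1

theorem avoids13d2_of_not_exists_letter_eq_two {w : Fin n → Fin 3}
    (hw : ¬ ∃ j, letter w j = 2) : Avoids13d2 w := by
  intro i j hij hj hlt
  have := one_le_letter w (show i < n by omega)
  have := letter_le w (i + 1)
  exact hw ⟨j, by omega⟩

end Ternary

theorem card_filter_forall_ne {ι α : Type*} [Fintype ι] [DecidableEq ι] [Fintype α]
    [DecidableEq α] (a : α) :
    #{w : ι → α | ∀ i, w i ≠ a} = (Fintype.card α - 1) ^ Fintype.card ι := by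
  have : ({w : ι → α | ∀ i, w i ≠ a} : Finset _) = Fintype.piFinset fun _ => {a}ᶜ := by
    ext w
    simp
  rw [this, Fintype.card_piFinset, prod_const, card_compl, card_singleton, card_univ]

theorem card_filter_eq_sum_card_filter_cons {α : Type*} [Fintype α] [DecidableEq α] {n : ℕ}
    (P : (Fin (n + 1) → α) → Prop) [DecidablePred P] :
    #{v | P v} = ∑ x, #{w : Fin n → α | P (Fin.cons x w)} := by
  rw [card_eq_sum_card_fiberwise (f := fun v => v 0) (t := univ) (fun _ _ => mem_univ _)]
  refine sum_congr rfl fun x _ => card_nbij' Fin.tail (fun w => Fin.cons x w) ?_ ?_ ?_ ?_ <;>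
    intro v <;> simp only [coe_filter, mem_filter, mem_univ, true_and, Set.mem_ofPred_eq]
  · rintro ⟨hv, rfl⟩
    rwa [Fin.cons_self_tail]
  · exact fun hv => ⟨hv, Fin.cons_zero _ _⟩
  · rintro ⟨-, rfl⟩
    exact Fin.cons_self_tail v
  · exact fun _ => Fin.tail_cons _ _

section Counting

open Classical

theorem f_eq_card (n : ℕ) : f n = #{w : Fin n → Fin 3 | Avoids13d2 w} := by
  rw [f, Nat.card_eq_fintype_card, Fintype.card_subtype]

theorem card_avoids13d2_not_exists_letter_eq_two (n : ℕ) :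
    #{w : Fin n → Fin 3 | Avoids13d2 w ∧ ¬ ∃ j, letter w j = 2} = 2 ^ n := by
  have hfree : ∀ w : Fin n → Fin 3,
      (Avoids13d2 w ∧ ¬ ∃ j, letter w j = 2) ↔ ∀ i, w i ≠ 1 := fun w => by
    rw [and_iff_right_of_imp avoids13d2_of_not_exists_letter_eq_two, exists_letter_eq_two_iff,
      not_exists]
  rw [filter_congr fun w _ => hfree w]
  simpa using card_filter_forall_ne (ι := Fin n) (1 : Fin 3)

theorem f_succ_add_card_startsThreeHasTwo (n : ℕ) :
    f (n + 1) + #{w : Fin n → Fin 3 | Avoids13d2 w ∧ StartsThreeHasTwo w} =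
      3 * f n := by
  have hsplit := card_filter_add_card_filter_not (s := ({w | Avoids13d2 w} : Finset (Fin n → Fin 3)))
    StartsThreeHasTwo
  simp only [filter_filter] at hsplit
  rw [f_eq_card, f_eq_card, card_filter_eq_sum_card_filter_cons, Fin.sum_univ_three]
  simp only [avoids13d2_cons_iff_of_three, true_and, Fin.reduceEq, false_and, not_false_eq_true,
    and_true]
  omega

theorem card_startsThreeHasTwo_succ_add (n : ℕ) :
    #{w : Fin (n + 1) → Fin 3 | Avoids13d2 w ∧ StartsThreeHasTwo w} + 2 ^ n =
      f n := by
  have hsplit := card_filter_add_card_filter_not (s := ({w | Avoids13d2 w} : Finset (Fin n → Fin 3)))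
    (fun w => ∃ j, letter w j = 2)
  simp only [filter_filter] at hsplit
  rw [f_eq_card, card_filter_eq_sum_card_filter_cons, Fin.sum_univ_three]
  simp only [avoids13d2_cons_iff_of_three, StartsThreeHasTwo, letter_cons_zero,
    exists_letter_cons_eq_iff, Fin.val_zero, Fin.val_one, Fin.val_two, Fin.reduceEq, true_and,
    false_and, not_false_eq_true, and_true, Nat.reduceAdd, Nat.reduceEqDiff, false_or, and_false,
    filter_false, card_empty, zero_add]
  rw [← hsplit, card_avoids13d2_not_exists_letter_eq_two]

end Counting

theorem f_add_two_add_f (n : ℕ) : f (n + 2) + f n = 3 * f (n + 1) + 2 ^ n := by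
  have h₁ : f (n + 2) + _ = _ := f_succ_add_card_startsThreeHasTwo (n + 1)
  have h₂ := card_startsThreeHasTwo_succ_add n
  omega

theorem f_of_le_two {n : ℕ} (hn : n ≤ 2) : f n = 3 ^ n := by
  have hall (w : Fin n → Fin 3) : Avoids13d2 w := fun i j hij hj => by omega
  rw [f, Nat.card_congr (Equiv.subtypeUnivEquiv hall), Nat.card_eq_fintype_card, Fintype.card_fun,
    Fintype.card_fin, Fintype.card_fin]

namespace PowerSeries

variable {R : Type*} [CommRing R]

theorem mk_eq_C_add_X_mul_mk_succ (a : ℕ → R) : mk a = C (a 0) + X * mk fun n => a (n + 1) := by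
  ext (_ | n) <;> simp [coeff_succ_X_mul]

theorem mk_pow_mul_one_sub_C_mul_X (r : R) : (mk fun n => r ^ n) * (1 - C r * X) = 1 := by
  simpa [rescale_mk, rescale_X] using congrArg (rescale r) (mk_one_mul_one_sub_eq_one R)

end PowerSeries

theorem stmt12 :
    (PowerSeries.mk fun n => (f n : ℚ)) * ((1 - 2 * X) * (1 - 3 * X + X ^ 2)) =
      (1 - X : PowerSeries ℚ) ^ 2 := by
  have hF := mk_eq_C_add_X_mul_mk_succ fun n => (f n : ℚ)
  have hF₁ := mk_eq_C_add_X_mul_mk_succ fun n => (f (n + 1) : ℚ)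
  have hrec : (mk fun n => (f (n + 2) : ℚ)) + mk (fun n => (f n : ℚ)) =
      3 * (mk fun n => (f (n + 1) : ℚ)) + mk fun n => (2 : ℚ) ^ n := by
    rw [show (3 : ℚ⟦X⟧) = C 3 from (map_ofNat C 3).symm]
    ext n
    simp only [map_add, coeff_C_mul, coeff_mk]
    exact_mod_cast f_add_two_add_f n
  have hgeom := mk_pow_mul_one_sub_C_mul_X (2 : ℚ)
  rw [f_of_le_two (by norm_num)] at hF hF₁
  simp only [zero_add, pow_zero, pow_one, Nat.cast_one, Nat.cast_ofNat, map_one, map_ofNat]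
    at hF hF₁ hgeom
  -- `(1 - 3X) hF + X hF₁ + X² hrec` is `F (1 - 3X + X²) = 1 + X² G` for `G = ∑ 2ⁿ Xⁿ`.
  linear_combination (1 - 2 * X) * ((1 - 3 * X) * hF + X * hF₁ + X ^ 2 * hrec) + X ^ 2 * hgeom
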